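/- arXiv:1501.01505 — 2 statements merged into one kernel-verified Lean document; each statement's English description precedes it below -/
import Mathlib

section
/- Let 0 < p_1 < p_2 < ... < p_n and let r = 2k-1 be an odd integer with 1 ≤ r ≤ n. Then the inertia of the Loewner matrix L_r is (k, n-r, k-1), i.e., L_r has exactly k positive eigenvalues, n-r zero eigenvalues, and k-1 negative eigenvalues (counted with multiplicity). -/
open Matrix

/-- The Loewner matrix `L_r` associated with points `p 0, ..., p (n-1)` and exponent `r`:
its `(i,j)` entry is `(p i ^ r - p j ^ r) / (p i - p j)` for `i ≠ j` and `r * p i ^ (r-1)`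
for `i = j` (powers are real powers `Real.rpow`). -/
noncomputable def loewner {n : ℕ} (p : Fin n → ℝ) (r : ℝ) : Matrix (Fin n) (Fin n) ℝ :=
  Matrix.of fun i j => if i = j then r * p i ^ (r - 1) else (p i ^ r - p j ^ r) / (p i - p j)

/-!
For a natural exponent `r` the geometric-sum formula gives `L_r = V J Vᵀ`, where
`V = (p_i ^ a)` is an `n × r` Vandermonde matrix and `J` is the `r × r` exchange matrix. Hence
`rank L_r ≤ r`. Since an `r × r` minor of `V` is an invertible Vandermonde matrix, `Vᵀ` maps onto
`ℝ^r`, so by Sylvester's law of inertia `L_r` has at least as many positive (negative) eigenvalues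
as the exchange form `y ↦ ∑ a, y a * y (r - 1 - a)` has positive (negative) directions. That form
is positive definite on palindromic vectors, a space of dimension `⌈r/2⌉`, and negative definite
on antipalindromic ones, of dimension `⌊r/2⌋`. For `r = 2k - 1` these lower bounds `k` and `k - 1`
add up to `r ≥ rank L_r`, so both are attained and the kernel has dimension `n - r`.
-/

open QuadraticMap QuadraticForm Module

namespace QuadraticForm

variable {𝕜 M N : Type*} [Field 𝕜] [LinearOrder 𝕜] [AddCommGroup M] [AddCommGroup N]
  [Module 𝕜 M] [Module 𝕜 N] [FiniteDimensional 𝕜 M] [FiniteDimensional 𝕜 N]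

theorem sigPos_le_sigPos_comp (Q : QuadraticForm 𝕜 N) {f : M →ₗ[𝕜] N}
    (hf : Function.Surjective f) : sigPos Q ≤ sigPos (Q.comp f) := by
  obtain ⟨V, hV, hQV⟩ := exists_finrank_eq_sigPos_and_posDef Q
  obtain ⟨g, hfg⟩ := f.exists_rightInverse_of_surjective (LinearMap.range_eq_top.2 hf)
  have hfg' (x : N) : f (g x) = x := LinearMap.congr_fun hfg x
  have hg : Function.Injective g := Function.LeftInverse.injective hfg'
  rw [← hV, (Submodule.equivMapOfInjective g hg V).finrank_eq]
  refine le_sigPos_of_posDef _ ?_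
  rintro ⟨_, x, hx, rfl⟩ hx0
  have hx0' : (⟨x, hx⟩ : V) ≠ 0 := by rintro ⟨⟩; simp at hx0
  simpa [hfg'] using hQV ⟨x, hx⟩ hx0'

theorem sigNeg_le_sigNeg_comp (Q : QuadraticForm 𝕜 N) {f : M →ₗ[𝕜] N}
    (hf : Function.Surjective f) : sigNeg Q ≤ sigNeg (Q.comp f) :=
  sigPos_le_sigPos_comp (-Q) hf

end QuadraticForm

namespace Matrix

theorem dotProduct_self_pos {R n : Type*} [Fintype n] [Ring R] [LinearOrder R]
    [IsStrictOrderedRing R] {v : n → R} (hv : v ≠ 0) : 0 < v ⬝ᵥ v :=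
  (Finset.sum_nonneg fun i _ => mul_self_nonneg (v i)).lt_of_ne' (dotProduct_self_eq_zero.not.2 hv)

theorem toQuadraticForm'_mul_mul_transpose {R l m : Type*} [CommRing R] [Fintype l]
    [DecidableEq l] [Fintype m] [DecidableEq m] (B : Matrix m l R) (C : Matrix l l R) :
    (B * C * Bᵀ).toQuadraticForm' = C.toQuadraticForm'.comp Bᵀ.mulVecLin := by
  ext x
  simp only [toQuadraticForm', QuadraticMap.comp_apply, LinearMap.BilinMap.toQuadraticMap_apply,
    toLinearMap₂'_apply', mulVecLin_apply, ← mulVec_mulVec, dotProduct_mulVec, mulVec_transpose,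
    vecMul_vecMul]

theorem mulVecLin_transpose_rectVandermonde_surjective {K : Type*} [Field K] {n r : ℕ}
    {v : Fin n → K} (hv : Function.Injective v) (hr : r ≤ n) :
    Function.Surjective (rectVandermonde v 1 r)ᵀ.mulVecLin := by
  have hsub : (rectVandermonde v 1 r).submatrix (Fin.castLE hr) id =
      vandermonde (v ∘ Fin.castLE hr) := by
    ext
    simp [rectVandermonde_apply]
  have hunit : IsUnit (vandermonde (v ∘ Fin.castLE hr)) :=
    (isUnit_iff_isUnit_det _).2 <| isUnit_iff_ne_zero.2 <|
      det_vandermonde_ne_zero_iff.2 (hv.comp (Fin.castLE_injective hr))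
  have hrank : (rectVandermonde v 1 r)ᵀ.rank = r := by
    refine (rank_transpose _).trans (le_antisymm (rank_le_width _) ?_)
    simpa [hsub, rank_of_isUnit _ hunit] using
      rank_submatrix_le (rectVandermonde v 1 r) (Fin.castLE hr) id
  rw [← LinearMap.range_eq_top]
  exact Submodule.eq_top_of_finrank_eq (by rw [← rank, hrank, Module.finrank_fin_fun])

namespace IsHermitian

section Real

variable {n : Type*} [Fintype n] [DecidableEq n] {A : Matrix n n ℝ} (hA : A.IsHermitian)
include hA

theorem toQuadraticForm'_equivalent_weightedSumSquares :
    A.toQuadraticForm'.Equivalent (weightedSumSquares ℝ hA.eigenvalues) := by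
  set U := hA.eigenvectorUnitary
  have hD : (diagonal hA.eigenvalues).toQuadraticForm' = weightedSumSquares ℝ hA.eigenvalues := by
    ext x
    simp [toQuadraticForm', toLinearMap₂'_apply', weightedSumSquares_apply, dotProduct,
      mulVec_diagonal, mul_left_comm]
  have hQ : A.toQuadraticForm' = (weightedSumSquares ℝ hA.eigenvalues).comp
      (UnitaryGroup.toLinearEquiv (star U) : (n → ℝ) →ₗ[ℝ] n → ℝ) := by
    have hA' : A = (U : Matrix n n ℝ) * diagonal hA.eigenvalues * (U : Matrix n n ℝ)ᵀ := by
      conv_lhs => rw [hA.spectral_theorem]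
      simp [Unitary.conjStarAlgAut_apply, U, star_eq_conjTranspose]
    conv_lhs => rw [hA']
    rw [toQuadraticForm'_mul_mul_transpose, hD]
    ext x
    simp [UnitaryGroup.toLinearEquiv, star_eq_conjTranspose, mulVec_transpose]
  exact hQ ▸ ⟨(isometryEquivOfCompLinearEquiv _ _).symm⟩

theorem sigPos_toQuadraticForm' :
    sigPos A.toQuadraticForm' = Fintype.card {i // 0 < hA.eigenvalues i} := by
  rw [sigPos_of_equiv_weightedSumSquares hA.toQuadraticForm'_equivalent_weightedSumSquares,
    Set.ncard_eq_toFinset_card', Fintype.card_subtype, Set.toFinset_ofPred]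

theorem sigNeg_toQuadraticForm' :
    sigNeg A.toQuadraticForm' = Fintype.card {i // hA.eigenvalues i < 0} := by
  rw [sigNeg_of_equiv_weightedSumSquares hA.toQuadraticForm'_equivalent_weightedSumSquares,
    Set.ncard_eq_toFinset_card', Fintype.card_subtype, Set.toFinset_ofPred]

end Real

variable {𝕜 n : Type*} [RCLike 𝕜] [Fintype n] [DecidableEq n] {A : Matrix n n 𝕜}
  (hA : A.IsHermitian)
include hA

theorem card_pos_add_card_neg_eq_rank :
    Fintype.card {i // 0 < hA.eigenvalues i} + Fintype.card {i // hA.eigenvalues i < 0} =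
      A.rank := by
  rw [hA.rank_eq_card_non_zero_eigs, ← Fintype.card_subtype_or_disjoint]
  · exact Fintype.card_congr (Equiv.subtypeEquivRight fun i => by grind)
  · exact fun s h1 h2 i hi => ((h1 i hi).asymm (h2 i hi)).elim

theorem rank_add_card_eq_zero :
    A.rank + Fintype.card {i // hA.eigenvalues i = 0} = Fintype.card n := by
  rw [hA.rank_eq_card_non_zero_eigs, Fintype.card_subtype_compl,
    Nat.sub_add_cancel (Fintype.card_subtype_le _)]

end IsHermitian

end Matrix

section ExchangeForm

variable {R : Type*} [CommRing R]

variable (R) in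
def exchangeForm (r : ℕ) : QuadraticForm R (Fin r → R) :=
  ((Fin.revPerm (n := r)).permMatrix R).toQuadraticForm'

theorem exchangeForm_apply {r : ℕ} (y : Fin r → R) :
    exchangeForm R r y = y ⬝ᵥ (y ∘ Fin.rev) := by
  simp only [exchangeForm, toQuadraticForm', LinearMap.BilinMap.toQuadraticMap_apply,
    toLinearMap₂'_apply', permMatrix_mulVec]
  rfl

theorem exchangeForm_apply_of_comp_rev_eq_smul {r : ℕ} {y : Fin r → R} {c : R}
    (hy : y ∘ Fin.rev = c • y) : exchangeForm R r y = c * (y ⬝ᵥ y) := by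
  rw [exchangeForm_apply, hy, dotProduct_smul, smul_eq_mul]

variable {𝕜 : Type*} [Field 𝕜] [LinearOrder 𝕜] [IsStrictOrderedRing 𝕜]

theorem le_sigPos_exchangeForm (r : ℕ) : (r + 1) / 2 ≤ sigPos (exchangeForm 𝕜 r) := by
  let fold (a : Fin r) : Fin ((r + 1) / 2) := ⟨min a a.rev, by grind⟩
  have fold_rev (a : Fin r) : fold a.rev = fold a := by ext; simp [fold, min_comm]
  have fold_surjective : Function.Surjective fold := fun m =>
    ⟨Fin.castLE (by omega) m, by
      ext
      simp only [Fin.val_castLE, Fin.val_rev, inf_eq_left, fold]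
      omega⟩
  let ψ := LinearMap.funLeft 𝕜 𝕜 fold
  have hψ : Function.Injective ψ :=
    LinearMap.funLeft_injective_of_surjective 𝕜 𝕜 fold fold_surjective
  calc (r + 1) / 2 = finrank 𝕜 (LinearMap.range ψ) := by
        rw [LinearMap.finrank_range_of_inj hψ, Module.finrank_fin_fun]
    _ ≤ _ := le_sigPos_of_posDef _ ?_
  rintro ⟨_, z, rfl⟩ hz
  have hψz : ψ z ≠ 0 := fun h => hz (Subtype.ext h)
  rw [restrict_apply, exchangeForm_apply_of_comp_rev_eq_smul (c := 1) (by ext; simp [ψ, fold_rev]),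
    one_mul]
  exact dotProduct_self_pos hψz

theorem le_sigNeg_exchangeForm (r : ℕ) : r / 2 ≤ sigNeg (exchangeForm 𝕜 r) := by
  let low : Fin (r / 2) → Fin r := Fin.castLE (Nat.div_le_self r 2)
  let ψ := (LinearMap.id - LinearMap.funLeft 𝕜 𝕜 Fin.rev) ∘ₗ
    Function.ExtendByZero.linearMap 𝕜 low
  have hψ : Function.LeftInverse (LinearMap.funLeft 𝕜 𝕜 low) ψ := by
    intro z
    ext m
    have hrev : ¬∃ m', low m' = (low m).rev := by
      rintro ⟨m', h⟩
      simp only [Fin.ext_iff, Fin.val_castLE, Fin.val_rev, low] at h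
      omega
    simp [ψ, low, (Fin.castLE_injective _).extend_apply, Function.extend_apply' _ _ _ hrev]
  calc r / 2 = finrank 𝕜 (LinearMap.range ψ) := by
        rw [LinearMap.finrank_range_of_inj hψ.injective, Module.finrank_fin_fun]
    _ ≤ _ := le_sigNeg_of_negDef _ ?_
  rintro ⟨_, z, rfl⟩ hz
  have hψz : ψ z ≠ 0 := fun h => hz (Subtype.ext h)
  rw [restrict_apply, _root_.neg_apply,
    exchangeForm_apply_of_comp_rev_eq_smul (c := -1) (by ext; simp [ψ]), neg_one_mul, neg_neg]
  exact dotProduct_self_pos hψz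

end ExchangeForm

theorem loewner_eq_rectVandermonde_mul {n : ℕ} {p : Fin n → ℝ} (hp : Function.Injective p)
    (r : ℕ) : loewner p r = rectVandermonde p 1 r * (Fin.revPerm (n := r)).permMatrix ℝ *
      (rectVandermonde p 1 r)ᵀ := by
  ext i j
  have hentry : (rectVandermonde p 1 r * (Fin.revPerm (n := r)).permMatrix ℝ *
      (rectVandermonde p 1 r)ᵀ) i j = ∑ a ∈ Finset.range r, p j ^ a * p i ^ (r - 1 - a) := by
    simp [mul_apply, rectVandermonde_apply, Equiv.Perm.permMatrix, Fin.rev_eq_iff,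
      ← Fin.sum_univ_eq_sum_range, Nat.sub_sub, add_comm, mul_comm]
  rw [hentry, loewner, of_apply]
  split_ifs with hij
  · subst hij
    have hexp (a : ℕ) (ha : a ∈ Finset.range r) : p i ^ a * p i ^ (r - 1 - a) = p i ^ (r - 1) := by
      rw [← pow_add, Nat.add_sub_cancel' (by grind)]
    rw [Finset.sum_congr rfl hexp, Finset.sum_const, Finset.card_range, nsmul_eq_mul]
    rcases Nat.eq_zero_or_pos r with rfl | hr
    · simp
    · rw [← Real.rpow_natCast, Nat.cast_sub hr, Nat.cast_one]
  · rw [Real.rpow_natCast, Real.rpow_natCast, div_eq_iff (sub_ne_zero.2 (hp.ne hij))]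
    linear_combination geom_sum₂_mul (p j) (p i) r

theorem loewner_inertia_odd_general {n k r : ℕ} (p : Fin n → ℝ)
    (hmono : StrictMono p)
    (hr : r = 2 * k - 1) (hrn : r ≤ n)
    (hA : (loewner p (r : ℝ)).IsHermitian) :
    Fintype.card {i // 0 < hA.eigenvalues i} = k ∧
    Fintype.card {i // hA.eigenvalues i = 0} = n - r ∧
    Fintype.card {i // hA.eigenvalues i < 0} = k - 1 := by
  set V : Matrix (Fin n) (Fin r) ℝ := rectVandermonde p 1 r
  have hL : loewner p r = V * (Fin.revPerm (n := r)).permMatrix ℝ * Vᵀ :=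
    loewner_eq_rectVandermonde_mul hmono.injective r
  have hQ : (loewner p r).toQuadraticForm' = (exchangeForm ℝ r).comp Vᵀ.mulVecLin := by
    rw [hL, toQuadraticForm'_mul_mul_transpose]
    rfl
  have hV : Function.Surjective Vᵀ.mulVecLin :=
    mulVecLin_transpose_rectVandermonde_surjective hmono.injective hrn
  have hpos : (r + 1) / 2 ≤ Fintype.card {i // 0 < hA.eigenvalues i} := by
    rw [← hA.sigPos_toQuadraticForm', hQ]
    exact (le_sigPos_exchangeForm r).trans (sigPos_le_sigPos_comp _ hV)
  have hneg : r / 2 ≤ Fintype.card {i // hA.eigenvalues i < 0} := by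
    rw [← hA.sigNeg_toQuadraticForm', hQ]
    exact (le_sigNeg_exchangeForm r).trans (sigNeg_le_sigNeg_comp _ hV)
  have hrank : (loewner p r).rank ≤ r :=
    hL ▸ (rank_mul_le_left _ _).trans ((rank_mul_le_left _ _).trans (rank_le_width V))
  have hsplit := hA.card_pos_add_card_neg_eq_rank
  have hzero := hA.rank_add_card_eq_zero
  rw [Fintype.card_fin] at hzero
  omega

/-- If `r = 2k - 1` is an odd integer with `1 ≤ r ≤ n`, then the inertia of `L_r`
is `(k, n - r, k - 1)`. -/
theorem loewner_inertia_odd {n k r : ℕ} (p : Fin n → ℝ)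
    (hp : ∀ i, 0 < p i) (hmono : StrictMono p)
    (hk : 1 ≤ k) (hr : r = 2 * k - 1) (hr1 : 1 ≤ r) (hrn : r ≤ n)
    (hA : (loewner p (r : ℝ)).IsHermitian) :
    Fintype.card {i // 0 < hA.eigenvalues i} = k ∧
    Fintype.card {i // hA.eigenvalues i = 0} = n - r ∧
    Fintype.card {i // hA.eigenvalues i < 0} = k - 1 :=
  loewner_inertia_odd_general p hmono hr hrn hA
end

section
/- Let 0 < p_1 < p_2 < ... < p_n and let r be a positive real number different from 1, 2, ..., n-1. Then the Loewner matrix L_r is nonsingular (its determinant is nonzero). -/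
open Matrix

/-!
Suppose `L_r c = 0`. With `N(x) = ∏ₖ (x - pₖ)` and `[a, x] = (x ^ r - a ^ r) / (x - a)` (the
derivative when `x = a`), so that `[pⱼ, pᵢ]` is the `(i, j)` entry of `L_r`, put
`F(x) = N(x) ∑ⱼ [pⱼ, x] cⱼ`. Then `F(pᵢ) = 0` and `F'(pᵢ) = N'(pᵢ) (L_r c)ᵢ = 0`: every `pᵢ` is
a double zero of `F`. On the other hand `F(x) = x ^ r A(x) + B(x)` with
`A = ∑ⱼ cⱼ ∏_{k ≠ j} (X - pₖ)` and `deg A, deg B < n`, a combination of the `2n` powers `x ^ k`,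
`x ^ (r + k)` (`k < n`), which are distinct because `r > 0` and `r ∉ {1, …, n - 1}`.

A combination of `m` distinct powers `x ^ eᵢ` with more than `m - 1` zeros in `(0, ∞)`, counted
with multiplicity, vanishes identically: dividing by `x ^ e₀` and differentiating kills one
power, and by Rolle's theorem loses at most one zero. Hence `A = 0`, and `A(pᵢ) = cᵢ N'(pᵢ)`
forces `c = 0`.
-/

open Finset Set Filter Polynomial Lagrange

theorem HasDerivAt.mul_continuousAt_of_eq_zero {𝕜 : Type*} [NontriviallyNormedField 𝕜]
    {f g : 𝕜 → 𝕜} {f' x : 𝕜} (hf : HasDerivAt f f' x) (hfx : f x = 0)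
    (hg : ContinuousAt g x) : HasDerivAt (fun y => f y * g y) (f' * g x) x := by
  rw [hasDerivAt_iff_tendsto_slope] at hf ⊢
  refine (hf.mul (hg.tendsto.mono_left nhdsWithin_le_nhds)).congr fun y => ?_
  simp only [slope_def_field, hfx, sub_zero]
  ring

theorem exists_finset_deriv_eq_zero {f f' : ℝ → ℝ} {U : Set ℝ} [U.OrdConnected]
    (hf : ∀ x ∈ U, HasDerivAt f (f' x) x) {S : Finset ℝ} (hSU : ↑S ⊆ U)
    (hS : ∀ x ∈ S, f x = 0) :
    ∃ R : Finset ℝ, #S ≤ #R + 1 ∧ Disjoint R S ∧ ↑R ⊆ U ∧ ∀ z ∈ R, f' z = 0 := by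
  have hrolle : ∀ x ∈ S, ∀ y ∈ S, x < y → ∃ z ∈ Ioo x y, f' z = 0 := fun x hx y hy hxy =>
    have hIcc : Icc x y ⊆ U := Set.OrdConnected.out ‹_› (hSU hx) (hSU hy)
    exists_hasDerivAt_eq_zero hxy
      (fun z hz => (hf z (hIcc hz)).continuousAt.continuousWithinAt)
      ((hS x hx).trans (hS y hy).symm) fun z hz => hf z (hIcc (Ioo_subset_Icc_self hz))
  choose! ρ hρ using hrolle
  -- a Rolle point for every pair `x < y` of `S`; consecutive pairs alone give `#S - 1` of them
  set R := ((S ×ˢ S).filter fun q => q.1 < q.2).image fun q => ρ q.1 q.2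
  have hR : ∀ z ∈ R, ∃ x ∈ S, ∃ y ∈ S, z ∈ Ioo x y ∧ f' z = 0 := by
    simp only [R, Finset.mem_image, Finset.mem_filter, Finset.mem_product]
    rintro _ ⟨⟨x, y⟩, ⟨⟨hx, hy⟩, hxy⟩, rfl⟩
    exact ⟨x, hx, y, hy, hρ x hx y hy hxy⟩
  refine ⟨R \ S, card_le_sdiff_of_interleaved fun x hx y hy hxy _ => ?_, sdiff_disjoint,
    fun z hz => ?_, fun z hz => ?_⟩
  · exact ⟨ρ x y, Finset.mem_image.2 ⟨(x, y), by simp [hx, hy, hxy], rfl⟩, hρ x hx y hy hxy |>.1⟩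
  · obtain ⟨x, hx, y, hy, hz, -⟩ := hR z (Finset.sdiff_subset hz)
    exact Set.OrdConnected.out ‹_› (hSU hx) (hSU hy) (Ioo_subset_Icc_self hz)
  · obtain ⟨-, -, -, -, -, hz⟩ := hR z (Finset.sdiff_subset hz)
    exact hz

noncomputable def rpowSum {ι : Type*} (s : Finset ι) (a e : ι → ℝ) (x : ℝ) : ℝ :=
  ∑ i ∈ s, a i * x ^ e i

section rpowSum

variable {ι : Type*} {s : Finset ι} {a e : ι → ℝ} {x : ℝ}

theorem hasDerivAt_rpowSum (hx : x ≠ 0) :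
    HasDerivAt (rpowSum s a e) (rpowSum s (fun i => a i * e i) (fun i => e i - 1) x) x := by
  refine (HasDerivAt.fun_sum fun i _ =>
    (Real.hasDerivAt_rpow_const (p := e i) (Or.inl hx)).const_mul (a i)).congr_deriv ?_
  simp only [rpowSum, mul_assoc]

theorem rpowSum_insert_mul_rpow_neg [DecidableEq ι] {i : ι} (hi : i ∉ s) (hx : 0 < x) :
    rpowSum (insert i s) a e x * x ^ (-e i) = a i + rpowSum s a (fun j => e j - e i) x := by
  simp only [rpowSum, sum_insert hi, add_mul, sum_mul, mul_assoc, ← Real.rpow_add hx,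
    add_neg_cancel, Real.rpow_zero, mul_one, sub_eq_add_neg]

theorem hasDerivAt_rpowSum_insert_mul_rpow_neg [DecidableEq ι] {i : ι} (hi : i ∉ s)
    (hx : 0 < x) :
    HasDerivAt (fun y => rpowSum (insert i s) a e y * y ^ (-e i))
      (rpowSum s (fun j => a j * (e j - e i)) (fun j => e j - e i - 1) x) x :=
  ((hasDerivAt_rpowSum hx.ne').const_add (a i)).congr_of_eventuallyEq <|
    eventually_of_mem (Ioi_mem_nhds hx) fun _ hy => rpowSum_insert_mul_rpow_neg hi hy

theorem rpowSum_coeff_eq_zero_of_card_le [DecidableEq ι] (he : InjOn e s) {S T : Finset ℝ}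
    (hS : ↑S ⊆ Ioi (0 : ℝ)) (hTS : T ⊆ S) (hcard : #s ≤ #S + #T)
    (hf : ∀ x ∈ S, rpowSum s a e x = 0) (hf' : ∀ x ∈ T, deriv (rpowSum s a e) x = 0) :
    ∀ i ∈ s, a i = 0 := by
  induction s using Finset.induction_on generalizing a e S T with
  | empty => simp
  | insert i s hi ih =>
    rw [card_insert_of_notMem hi] at hcard
    set g' := rpowSum s (fun j => a j * (e j - e i)) (fun j => e j - e i - 1)
    have hg : ∀ x ∈ Ioi (0 : ℝ), HasDerivAt (fun y => rpowSum (insert i s) a e y * y ^ (-e i))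
        (g' x) x := fun x hx => hasDerivAt_rpowSum_insert_mul_rpow_neg hi hx
    obtain ⟨R, hSR, hRS, hR, hg'R⟩ := exists_finset_deriv_eq_zero hg hS
      fun x hx => by simp [hf x hx]
    have hg'T : ∀ x ∈ T, g' x = 0 := fun x hx => by
      have hx0 : 0 < x := hS (hTS hx)
      have hfx' : HasDerivAt (rpowSum (insert i s) a e) 0 x :=
        hf' x hx ▸ (hasDerivAt_rpowSum hx0.ne').differentiableAt.hasDerivAt
      simpa using (hg x hx0).unique (hfx'.mul_continuousAt_of_eq_zero (hf x (hTS hx))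
        (Real.continuousAt_rpow_const _ _ (Or.inl hx0.ne')))
    have hs : ∀ j ∈ s, a j * (e j - e i) = 0 := by
      refine ih (e := fun j => e j - e i - 1) (S := T ∪ R) (T := ∅) (fun j hj k hk hjk => ?_) ?_
        (empty_subset _) ?_ ?_ (by simp)
      · exact he (mem_insert_of_mem hj) (mem_insert_of_mem hk) (by simpa using hjk)
      · simpa using ⟨(coe_subset.2 hTS).trans hS, hR⟩
      · have := card_union_of_disjoint (disjoint_of_subset_left hTS hRS.symm)
        omega
      · intro x hx
        rcases Finset.mem_union.1 hx with hx | hx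
        exacts [hg'T x hx, hg'R x hx]
    have hs' : ∀ j ∈ s, a j = 0 := fun j hj => (mul_eq_zero.1 (hs j hj)).resolve_right <|
      sub_ne_zero.2 fun h => hi (he (mem_insert_of_mem hj) (mem_insert_self i s) h ▸ hj)
    obtain ⟨x, hx⟩ : S.Nonempty := card_pos.1 (by have := Finset.card_le_card hTS; omega)
    have hfx := hf x hx
    rw [rpowSum, sum_insert hi, sum_eq_zero fun j hj => by rw [hs' j hj, zero_mul],
      add_zero] at hfx
    have hai : a i = 0 := (mul_eq_zero.1 hfx).resolve_right (Real.rpow_pos_of_pos (hS hx) _).ne'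
    intro j hj
    rcases mem_insert.1 hj with rfl | hj
    exacts [hai, hs' j hj]

end rpowSum

theorem eval_nodal_mul_dslope {ι 𝕜 : Type*} [DecidableEq ι] [NontriviallyNormedField 𝕜]
    {s : Finset ι} {v : ι → 𝕜} {i : ι} (hi : i ∈ s) (f : 𝕜 → 𝕜) (x : 𝕜) :
    (nodal s v).eval x * dslope f (v i) x = (f x - f (v i)) * (nodal (s.erase i) v).eval x := by
  rw [nodal_eq_mul_nodal_erase hi, eval_mul, eval_sub, eval_X, eval_C, mul_right_comm,
    ← smul_eq_mul (x - v i), sub_smul_dslope]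

theorem continuousAt_dslope_rpow {b : ℝ} (r a : ℝ) (hb : 0 < b) :
    ContinuousAt (dslope (fun x => x ^ r) a) b := by
  rcases eq_or_ne b a with rfl | hba
  · exact continuousAt_dslope_same.2 (Real.differentiableAt_rpow_const_of_ne r hb.ne')
  · exact (continuousAt_dslope_of_ne hba).2 (Real.continuousAt_rpow_const _ _ (Or.inl hb.ne'))

theorem rpow_mul_eval_add_eval_eq_rpowSum {A B : ℝ[X]} {n : ℕ} (hA : A.natDegree < n)
    (hB : B.natDegree < n) (r : ℝ) {x : ℝ} (hx : 0 < x) :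
    x ^ r * A.eval x + B.eval x = rpowSum ((range n).disjSum (range n))
      (Sum.elim A.coeff B.coeff) (Sum.elim (fun k => r + k) (fun k => k)) x := by
  simp only [rpowSum, sum_disjSum, Sum.elim_inl, Sum.elim_inr, eval_eq_sum_range' hA,
    eval_eq_sum_range' hB, mul_sum, Real.rpow_add hx, Real.rpow_natCast]
  congr 1
  exact sum_congr rfl fun k _ => by ring

theorem injOn_sumElim_add_natCast {n : ℕ} {r : ℝ} (hr : 0 < r)
    (hri : ∀ k : ℕ, 1 ≤ k → k ≤ n - 1 → r ≠ (k : ℝ)) :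
    InjOn (Sum.elim (fun k : ℕ => r + k) (fun k : ℕ => (k : ℝ))) ((range n).disjSum (range n)) := by
  have hne : ∀ k < n, ∀ m < n, r + k ≠ m := fun k hk m hm h => by
    have hkm : k < m := by exact_mod_cast (show (k : ℝ) < m by linarith)
    exact hri (m - k) (by omega) (by omega) (by push_cast [Nat.cast_sub hkm.le]; linarith)
  rintro (k | k) hk (m | m) hm h <;>
    simp only [mem_coe, inl_mem_disjSum, inr_mem_disjSum, Finset.mem_range, Sum.elim_inl,
      Sum.elim_inr, Sum.inl.injEq, Sum.inr.injEq, reduceCtorEq] at hk hm h ⊢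
  · exact_mod_cast add_left_cancel h
  · exact hne k hk m hm h
  · exact hne m hm k hk h.symm
  · exact_mod_cast h

theorem loewner_apply_eq_dslope {n : ℕ} {p : Fin n → ℝ} (hp : Function.Injective p) (r : ℝ)
    (i j : Fin n) : loewner p r i j = dslope (fun x => x ^ r) (p j) (p i) := by
  rcases eq_or_ne i j with rfl | hij
  · simp [loewner, Real.deriv_rpow_const]
  · simp [loewner, hij, dslope_of_ne _ (hp.ne hij), slope_def_field]

section Loewner

variable {n : ℕ} {p : Fin n → ℝ}

noncomputable def nodalComb (p d : Fin n → ℝ) : ℝ[X] :=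
  ∑ j, C (d j) * nodal (univ.erase j) p

theorem natDegree_nodalComb_le (d : Fin n → ℝ) : (nodalComb p d).natDegree ≤ n - 1 :=
  natDegree_sum_le_of_forall_le _ _ fun j _ =>
    (natDegree_C_mul_le _ _).trans (by simp [natDegree_nodal])

theorem eval_nodalComb_node (d : Fin n → ℝ) (i : Fin n) :
    (nodalComb p d).eval (p i) = d i * (nodal (univ.erase i) p).eval (p i) := by
  rw [nodalComb, eval_finsetSum, sum_eq_single i (fun j _ hji => ?_) (by simp), eval_mul, eval_C]
  rw [eval_mul, eval_nodal_at_node (by simp [hji.symm]), mul_zero]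

theorem eq_zero_of_nodalComb_eq_zero (hp : Function.Injective p) {d : Fin n → ℝ}
    (hd : nodalComb p d = 0) : d = 0 := by
  funext i
  have hdi := eval_nodalComb_node (p := p) d i
  rw [hd, eval_zero, eq_comm] at hdi
  exact (mul_eq_zero.1 hdi).resolve_right
    (eval_nodal_not_at_node fun j hj => hp.ne (Finset.ne_of_mem_erase hj).symm)

noncomputable def loewnerFun (p : Fin n → ℝ) (r : ℝ) (c : Fin n → ℝ) (x : ℝ) : ℝ :=
  (nodal univ p).eval x * ∑ j, dslope (fun y => y ^ r) (p j) x * c j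

variable {r : ℝ} {c : Fin n → ℝ}

theorem loewnerFun_eq (x : ℝ) :
    loewnerFun p r c x =
      x ^ r * (nodalComb p c).eval x + (nodalComb p fun j => -(c j * p j ^ r)).eval x := by
  simp only [loewnerFun, nodalComb, mul_sum, eval_finsetSum, eval_mul, eval_C,
    ← sum_add_distrib]
  refine sum_congr rfl fun j _ => ?_
  rw [← mul_assoc, eval_nodal_mul_dslope (mem_univ j)]
  ring

theorem loewnerFun_node (i : Fin n) : loewnerFun p r c (p i) = 0 := by
  simp only [loewnerFun, eval_nodal_at_node (mem_univ i), zero_mul]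

theorem hasDerivAt_loewnerFun_node (hinj : Function.Injective p) {i : Fin n} (hpi : 0 < p i) :
    HasDerivAt (loewnerFun p r c)
      ((nodal univ p).derivative.eval (p i) * (loewner p r *ᵥ c) i) (p i) := by
  have hcont : ContinuousAt (fun x => ∑ j, dslope (fun y => y ^ r) (p j) x * c j) (p i) :=
    tendsto_finsetSum _ fun j _ => (continuousAt_dslope_rpow r (p j) hpi).mul_const _
  have hmulVec : (loewner p r *ᵥ c) i = ∑ j, dslope (fun y => y ^ r) (p j) (p i) * c j := by
    simp [mulVec, dotProduct, loewner_apply_eq_dslope hinj]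
  rw [hmulVec]
  exact ((nodal univ p).hasDerivAt (p i)).mul_continuousAt_of_eq_zero
    (eval_nodal_at_node (mem_univ i)) hcont

theorem nodalComb_eq_zero_of_loewner_mulVec_eq_zero (hp : ∀ i, 0 < p i)
    (hinj : Function.Injective p) (hr : 0 < r) (hri : ∀ k : ℕ, 1 ≤ k → k ≤ n - 1 → r ≠ (k : ℝ))
    (hc : loewner p r *ᵥ c = 0) : nodalComb p c = 0 := by
  obtain rfl | hn := n.eq_zero_or_pos
  · simp [nodalComb]
  set B := nodalComb p fun j => -(c j * p j ^ r)
  have hdeg (d : Fin n → ℝ) : (nodalComb p d).natDegree < n :=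
    (natDegree_nodalComb_le d).trans_lt (by omega)
  have hsum : ∀ x > 0, loewnerFun p r c x = rpowSum ((range n).disjSum (range n))
      (Sum.elim (nodalComb p c).coeff B.coeff) (Sum.elim (fun k => r + k) (fun k => k)) x :=
    fun x hx => (loewnerFun_eq x).trans (rpow_mul_eval_add_eval_eq_rpowSum (hdeg _) (hdeg _) r hx)
  have hcoeff :
      ∀ k ∈ (range n).disjSum (range n), Sum.elim (nodalComb p c).coeff B.coeff k = 0 := by
    refine rpowSum_coeff_eq_zero_of_card_le (injOn_sumElim_add_natCast hr hri)
      (S := univ.image p) (T := univ.image p) ?_ subset_rfl ?_ ?_ ?_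
    · simpa [Set.subset_def] using hp
    · simp [card_image_of_injective _ hinj]
    · simpa [← hsum _ (hp _)] using loewnerFun_node
    · simp only [Finset.mem_image, Finset.mem_univ, true_and, forall_exists_index,
        forall_apply_eq_imp_iff]
      intro i
      have hderiv := hasDerivAt_loewnerFun_node (r := r) (c := c) hinj (hp i)
      rw [hc, Pi.zero_apply, mul_zero] at hderiv
      exact (hderiv.congr_of_eventuallyEq (eventually_of_mem (Ioi_mem_nhds (hp i))
        fun x hx => (hsum x hx).symm)).deriv
  ext k
  rcases lt_or_ge k n with hk | hk
  · simpa using hcoeff (Sum.inl k) (by simp [hk])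
  · exact coeff_eq_zero_of_natDegree_lt ((hdeg c).trans_le hk)

end Loewner

/-- If `r > 0` is different from `1, 2, …, n-1`, then the Loewner matrix `L_r`
is nonsingular. -/
theorem loewner_nonsingular {n : ℕ} (p : Fin n → ℝ)
    (hp : ∀ i, 0 < p i) (hmono : StrictMono p)
    (r : ℝ) (hr : 0 < r) (hri : ∀ k : ℕ, 1 ≤ k → k ≤ n - 1 → r ≠ (k : ℝ)) :
    (loewner p r).det ≠ 0 := by
  intro hdet
  obtain ⟨c, hc0, hc⟩ := Matrix.exists_mulVec_eq_zero_iff.2 hdet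
  exact hc0 (eq_zero_of_nodalComb_eq_zero hmono.injective
    (nodalComb_eq_zero_of_loewner_mulVec_eq_zero hp hmono.injective hr hri hc))
end
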